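/- Define h : [0,1) → ℝ by h(p) = (3/5)·p + (2.31 − p)·(2/3 − (4/5)·ln(1/(1−p)) − (4/5)·ln(2.31 − p)). Then h is decreasing on [0,1), so for every p ∈ [0,1) one has h(p) ≤ h(0) = 2.31·(2/3 − (4/5)·ln 2.31), and moreover h(0) < 0. Consequently h(p) < 0 for all p ∈ [0,1). -/

import Mathlib

/-!
With `r = (2.31 - p)/(1 - p)` the derivative of `hFun` collapses to `11/15 + (4/5)(log r - r)`,
which is at most `11/15 - 4/5 = -1/15` because `log r ≤ r - 1`. Hence `hFun` decreases on
`(-∞, 1)`, and `hFun 0 < 0` amounts to `log 2.31 > 5/6`, i.e. `e⁵ < 2.31⁶`.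
-/

/-- The function `h(p) = (3/5)p + (2.31 - p)(2/3 - (4/5)ln(1/(1-p)) - (4/5)ln(2.31 - p))`. -/
noncomputable def hFun (p : ℝ) : ℝ :=
  (3 / 5) * p +
    (2.31 - p) *
      (2 / 3 - (4 / 5) * Real.log (1 / (1 - p)) - (4 / 5) * Real.log (2.31 - p))

open Real Set

lemma hFun_eq_log_one_sub (p : ℝ) :
    hFun p = 3 / 5 * p + (2.31 - p) * (2 / 3 + 4 / 5 * log (1 - p) - 4 / 5 * log (2.31 - p)) := by
  simp only [hFun, one_div, log_inv]
  ring

lemma hasDerivAt_hFun {p : ℝ} (hp : p < 1) :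
    HasDerivAt hFun (11 / 15 + 4 / 5 * (log ((2.31 - p) / (1 - p)) - (2.31 - p) / (1 - p))) p := by
  have h₁ : 1 - p ≠ 0 := by linarith
  have h₂ : 2.31 - p ≠ 0 := by linarith
  have hlog₁ := ((hasDerivAt_id' p).const_sub 1).log h₁
  have hlog₂ := ((hasDerivAt_id' p).const_sub 2.31).log h₂
  have hsum := ((hasDerivAt_id' p).const_mul (3 / 5 : ℝ)).add
    (((hasDerivAt_id' p).const_sub 2.31).mul
      (((hlog₁.const_mul (4 / 5 : ℝ)).const_add (2 / 3)).sub (hlog₂.const_mul (4 / 5 : ℝ))))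
  rw [funext hFun_eq_log_one_sub]
  refine hsum.congr_deriv ?_
  simp only [Pi.sub_apply, log_div h₂ h₁]
  field_simp
  ring

lemma hFun_strictAntiOn : StrictAntiOn hFun (Iio 1) := by
  refine strictAntiOn_of_deriv_neg (convex_Iio 1)
    (fun p hp => (hasDerivAt_hFun hp).continuousAt.continuousWithinAt) fun p hp => ?_
  rw [interior_Iio, mem_Iio] at hp
  have hr : 0 < (2.31 - p) / (1 - p) := div_pos (by linarith) (by linarith)
  rw [(hasDerivAt_hFun hp).deriv]
  linarith [log_le_sub_one_of_pos hr]

lemma five_sixths_lt_log : 5 / 6 < log 2.31 := by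
  rw [lt_log_iff_exp_lt (by norm_num)]
  refine lt_of_pow_lt_pow_left₀ 6 (by norm_num) ?_
  calc exp (5 / 6) ^ 6 = exp 1 ^ 5 := by rw [← exp_nat_mul, ← exp_nat_mul]; norm_num
    _ < 2.7182818286 ^ 5 := pow_lt_pow_left₀ exp_one_lt_d9 (exp_pos 1).le (by norm_num)
    _ < 2.31 ^ 6 := by norm_num

/-- `h` is decreasing on `[0,1)`, hence `h(p) ≤ h(0) = 2.31·(2/3 - (4/5)·ln 2.31)`
for all `p ∈ [0,1)`; moreover `h(0) < 0`, and consequently `h(p) < 0` on `[0,1)`. -/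
theorem hFun_neg_on_Ico :
    AntitoneOn hFun (Set.Ico 0 1) ∧
    (∀ p ∈ Set.Ico (0 : ℝ) 1, hFun p ≤ hFun 0) ∧
    hFun 0 = 2.31 * (2 / 3 - (4 / 5) * Real.log 2.31) ∧
    hFun 0 < 0 ∧
    (∀ p ∈ Set.Ico (0 : ℝ) 1, hFun p < 0) := by
  have hanti : AntitoneOn hFun (Ico 0 1) := hFun_strictAntiOn.antitoneOn.mono Ico_subset_Iio_self
  have hle : ∀ p ∈ Ico (0 : ℝ) 1, hFun p ≤ hFun 0 :=
    fun p hp => hanti (left_mem_Ico.2 one_pos) hp hp.1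
  have hzero : hFun 0 = 2.31 * (2 / 3 - (4 / 5) * log 2.31) := by norm_num [hFun]
  have hneg : hFun 0 < 0 := by
    rw [hzero]
    linarith [five_sixths_lt_log]
  exact ⟨hanti, hle, hzero, hneg, fun p hp => (hle p hp).trans_lt hneg⟩
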